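/- For α ≠ 0 the polynomial I_n equals (-i)^n · α^{n/2} · H_n( i·I_1 / (2·α^{1/2}) ), where H_n is the classical (physicists') Hermite polynomial and I_1 = νw - 2αz - ξ. Here α^{1/2} denotes a fixed complex square root of α. -/
import Mathlib


open Complex

noncomputable def Ic (ν α ξ z w : ℂ) : ℕ → ℂ
  | 0 => 1
  | 1 => ν * w - 2 * α * z - ξ
  | (n + 2) => (ν * w - 2 * α * z - ξ) * Ic ν α ξ z w (n + 1)
      + 2 * α * (n + 1) * Ic ν α ξ z w n

noncomputable def Hc : ℕ → ℂ → ℂ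
  | 0, _ => 1
  | 1, x => 2 * x
  | (n + 2), x => 2 * x * Hc (n + 1) x - 2 * (n + 1) * Hc n x

theorem stmt6 (ν α ξ z w s : ℂ) (hα : α ≠ 0) (hs : s ^ 2 = α) (n : ℕ) :
    Ic ν α ξ z w n =
      (-Complex.I) ^ n * s ^ n *
        Hc n (Complex.I * (ν * w - 2 * α * z - ξ) / (2 * s)) := by
  subst hs
  have hs0 : s ≠ 0 := by
    intro h; apply hα; rw [h]; ring
  induction n using Nat.twoStepInduction with
  | zero => simp [Ic, Hc]
  | one =>
    simp only [Ic, Hc, pow_one]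
    field_simp
    ring_nf
    have h3 : (Complex.I)^3 = -Complex.I := by simp [pow_succ, Complex.I_sq]
    simp only [h3, Complex.I_sq]
    ring
  | more n ih2 ih1 =>
    show Ic ν (s^2) ξ z w (n + 2) = _
    rw [Ic, ih1, ih2, Hc]
    field_simp
    ring_nf
    have h3 : (Complex.I)^3 = -Complex.I := by simp [pow_succ, Complex.I_sq]
    simp only [h3, Complex.I_sq]
    ring
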